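/- The number of edge-state vectors X : E → Bool for which there exists S : V → Bool with (X, S) satisfying ψ equals the number of edge-state vectors in the failure domain, i.e., #F_K = |Ω_f|. -/

import Mathlib

/-- One step along an operational edge: `a` and `b` are the two endpoints of some
edge `e` with `X e = true`. -/
def edgeStep {V E : Type*} (uE vE : E → V) (X : E → Bool) (a b : V) : Prop :=
  ∃ e : E, X e = true ∧ ((uE e = a ∧ vE e = b) ∨ (uE e = b ∧ vE e = a))

/-- `a` and `b` are `X`-connected: reflexive-transitive closure of `edgeStep`. -/
def xConnected {V E : Type*} (uE vE : E → V) (X : E → Bool) (a b : V) : Prop :=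
  Relation.ReflTransGen (edgeStep uE vE X) a b

/-- The state `X` is safe (`Φ(X) = 1`): every pair of terminals is `X`-connected. -/
def safe {V E : Type*} (uE vE : E → V) (K : Finset V) (X : E → Bool) : Prop :=
  ∀ a ∈ K, ∀ b ∈ K, xConnected uE vE X a b

/-- `(X, S)` satisfies the formula `ψ`. -/
def satPsi {V E : Type*} (uE vE : E → V) (K : Finset V) (X : E → Bool) (S : V → Bool) : Prop :=
  (∃ j ∈ K, S j = true) ∧ (∃ k ∈ K, S k = false) ∧
    ∀ e : E, ((S (uE e) = true ∧ X e = true) → S (vE e) = true) ∧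
      ((S (vE e) = true ∧ X e = true) → S (uE e) = true)

/-! A set `S` of vertices satisfying `ψ` is closed under operational edges, so it contains
everything `X`-connected to its terminal `j`; as it misses the terminal `k`, the state is unsafe.
Conversely, if terminals `a`, `b` are not `X`-connected, the `X`-component of `a` satisfies `ψ`. -/

section

variable {V E : Type*} {uE vE : E → V} {K : Finset V} {X : E → Bool} {S : V → Bool}

lemma satPsi.apply_eq_true_of_edgeStep (hS : satPsi uE vE K X S) {a b : V}
    (hab : edgeStep uE vE X a b) (ha : S a = true) : S b = true := by
  obtain ⟨e, he, ⟨rfl, rfl⟩ | ⟨rfl, rfl⟩⟩ := hab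
  · exact (hS.2.2 e).1 ⟨ha, he⟩
  · exact (hS.2.2 e).2 ⟨ha, he⟩

lemma satPsi.apply_eq_true_of_xConnected (hS : satPsi uE vE K X S) {a b : V}
    (hab : xConnected uE vE X a b) (ha : S a = true) : S b = true := by
  induction hab with
  | refl => exact ha
  | tail _ hstep ih => exact hS.apply_eq_true_of_edgeStep hstep ih

lemma satPsi.not_safe (hS : satPsi uE vE K X S) : ¬ safe uE vE K X := by
  intro hsafe
  obtain ⟨⟨j, hj, hSj⟩, ⟨k, hk, hSk⟩, -⟩ := id hS
  have hSk' := hS.apply_eq_true_of_xConnected (hsafe j hj k hk) hSj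
  simp_all

open Classical in
lemma satPsi_xConnected_of_not_xConnected {a b : V} (ha : a ∈ K) (hb : b ∈ K)
    (hab : ¬ xConnected uE vE X a b) :
    satPsi uE vE K X (fun v => decide (xConnected uE vE X a v)) := by
  refine ⟨⟨a, ha, decide_eq_true .refl⟩, ⟨b, hb, decide_eq_false hab⟩, fun e => ⟨?_, ?_⟩⟩
  · rintro ⟨hu, he⟩
    exact decide_eq_true ((of_decide_eq_true hu).tail ⟨e, he, .inl ⟨rfl, rfl⟩⟩)
  · rintro ⟨hv, he⟩
    exact decide_eq_true ((of_decide_eq_true hv).tail ⟨e, he, .inr ⟨rfl, rfl⟩⟩)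

lemma exists_satPsi_iff_not_safe : (∃ S, satPsi uE vE K X S) ↔ ¬ safe uE vE K X := by
  refine ⟨fun ⟨_, hS⟩ => hS.not_safe, fun hX => ?_⟩
  simp only [safe, not_forall] at hX
  obtain ⟨a, ha, b, hb, hab⟩ := hX
  exact ⟨_, satPsi_xConnected_of_not_xConnected ha hb hab⟩

end

theorem stmt1_general {V E : Type*} (uE vE : E → V) (K : Finset V) :
    Nat.card {X : E → Bool // ∃ S : V → Bool, satPsi uE vE K X S}
      = Nat.card {X : E → Bool // ¬ safe uE vE K X} :=
  Nat.card_congr (Equiv.subtypeEquivRight fun _ => exists_satPsi_iff_not_safe)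

/-- the projected model count `#F_K` of `ψ` equals the size of the
failure domain `Ω_f`. -/
theorem stmt1 {V E : Type*} [Fintype V] [Fintype E] (uE vE : E → V) (K : Finset V)
    (hK : 2 ≤ K.card) :
    Nat.card {X : E → Bool // ∃ S : V → Bool, satPsi uE vE K X S}
      = Nat.card {X : E → Bool // ¬ safe uE vE K X} :=
  stmt1_general uE vE K
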